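/- arXiv:2210.11163 — 5 statements merged into one kernel-verified Lean document; each statement's English description precedes it below -/
import Mathlib

section
/- Let I = [x₁, x_N] ⊂ ℝ with partition x₁ < x₂ < ... < x_N, let u_i : I → [x_i, x_{i+1}] be homeomorphisms with u_i(x₁) = x_i and u_i(x_N) = x_{i+1}, and let v_i : I × ℝ → ℝ be continuous in the first variable and Lipschitz in the second variable with constant |α_i| < 1, satisfying v_i(x₁, y₁) = y_i and v_i(x_N, y_N) = y_{i+1}. Then the Read–Bajraktarević operator Tg(x) := v_i(u_i^{-1}(x), g(u_i^{-1}(x))) for x ∈ u_i(I) is a contraction on the complete metric space 𝒢 = { g ∈ C(I) : g(x₁) = y₁, g(x_N) = y_N } with the sup metric, with contraction factor max_i |α_i|, and hence possesses a unique fixed point f* ∈ 𝒢 satisfying f*(u_i(x)) = v_i(x, f*(x)) for all x ∈ I and each i. -/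
/-!
The operator contracts the sup distance by `max_i |α_i|`: every point of `I` has the form
`u_i t`, where `|Tg(u_i t) - Th(u_i t)| = |v_i(t, g t) - v_i(t, h t)| ≤ |α_i| |g t - h t|`.
Banach's theorem gives a unique fixed point in `C(I)`; it lies in `𝒢` because `𝒢` is closed,
nonempty (it contains the affine interpolant of the endpoints) and mapped into itself by `T`,
so the iterates of any of its points stay in `𝒢` and converge to the fixed point.
-/

open Set

theorem ContractingWith.fixedPoint_mem_of_mapsTo {α : Type*} [MetricSpace α] [CompleteSpace α]
    [Nonempty α] {K : NNReal} {f : α → α} (hf : ContractingWith K f) {s : Set α}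
    (hs : IsClosed s) (hne : s.Nonempty) (hfs : MapsTo f s s) : fixedPoint f hf ∈ s := by
  obtain ⟨a, ha⟩ := hne
  exact hs.mem_of_tendsto (hf.tendsto_iterate_fixedPoint a)
    (Filter.Eventually.of_forall fun n => hfs.iterate n ha)

theorem ContinuousMap.dist_le_of_forall_eq_of_dist_le {X ι E : Type*} [TopologicalSpace X]
    [CompactSpace X] [PseudoMetricSpace E] {K : ℝ} (hK : 0 ≤ K) {u : ι → X → X}
    (hu : ∀ p, ∃ i t, u i t = p) {v : ι → X → E → E}
    (hv : ∀ i t r₁ r₂, dist (v i t r₁) (v i t r₂) ≤ K * dist r₁ r₂) {T : C(X, E) → C(X, E)}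
    (hT : ∀ g i t, T g (u i t) = v i t (g t)) (g h : C(X, E)) :
    dist (T g) (T h) ≤ K * dist g h := by
  refine (ContinuousMap.dist_le (mul_nonneg hK dist_nonneg)).2 fun p => ?_
  obtain ⟨i, t, rfl⟩ := hu p
  rw [hT, hT]
  exact (hv i t _ _).trans (mul_le_mul_of_nonneg_left (dist_apply_le_dist t) hK)

theorem ContinuousMap.exists_Icc_eq_left_eq_right {E : Type*} [NormedAddCommGroup E]
    [NormedSpace ℝ E] {a b : ℝ} (hab : a < b) (c d : E) :
    ∃ g : C(Icc a b, E), g ⟨a, left_mem_Icc.2 hab.le⟩ = c ∧ g ⟨b, right_mem_Icc.2 hab.le⟩ = d := by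
  refine ⟨⟨fun p => AffineMap.lineMap c d (((p : ℝ) - a) / (b - a)), by fun_prop⟩, ?_, ?_⟩
  · simp
  · simp [div_self (sub_ne_zero.2 hab.ne')]

theorem ContinuousMap.isClosed_setOf_eq_and_eq {X E : Type*} [TopologicalSpace X]
    [TopologicalSpace E] [T2Space E] (a b : X) (c d : E) :
    IsClosed {g : C(X, E) | g a = c ∧ g b = d} :=
  (isClosed_eq (continuous_eval_const a) continuous_const).inter
    (isClosed_eq (continuous_eval_const b) continuous_const)

theorem readBajraktarevic_contraction_general
    (N : ℕ) (x : Fin (N + 1) → ℝ) (hx : StrictMono x)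
    (y : Fin (N + 1) → ℝ)
    (h0 : x 0 ∈ Icc (x 0) (x (Fin.last N))) (hL : x (Fin.last N) ∈ Icc (x 0) (x (Fin.last N)))
    (u : Fin N → Icc (x 0) (x (Fin.last N)) → Icc (x 0) (x (Fin.last N)))
    (v : Fin N → Icc (x 0) (x (Fin.last N)) → ℝ → ℝ)
    (α : Fin N → ℝ) (hα : ∀ i, |α i| < 1)
    (hv_lip : ∀ i t r₁ r₂, |v i t r₁ - v i t r₂| ≤ |α i| * |r₁ - r₂|)
    (hcover : ∀ p : Icc (x 0) (x (Fin.last N)), ∃ i t, u i t = p)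
    (T : C(Icc (x 0) (x (Fin.last N)), ℝ) → C(Icc (x 0) (x (Fin.last N)), ℝ))
    (hT : ∀ g, ∀ i, ∀ t, T g (u i t) = v i t (g t))
    (hT𝒢 : ∀ g : C(Icc (x 0) (x (Fin.last N)), ℝ),
      g ⟨x 0, h0⟩ = y 0 ∧ g ⟨x (Fin.last N), hL⟩ = y (Fin.last N) →
      T g ⟨x 0, h0⟩ = y 0 ∧ T g ⟨x (Fin.last N), hL⟩ = y (Fin.last N)) :
    (∀ g h : C(Icc (x 0) (x (Fin.last N)), ℝ),
        dist (T g) (T h) ≤ (⨆ i, |α i|) * dist g h) ∧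
    (⨆ i, |α i|) < 1 ∧
    ∃! fstar : C(Icc (x 0) (x (Fin.last N)), ℝ),
      (fstar ⟨x 0, h0⟩ = y 0 ∧ fstar ⟨x (Fin.last N), hL⟩ = y (Fin.last N)) ∧
      T fstar = fstar ∧ ∀ i t, fstar (u i t) = v i t (fstar t) := by
  have : Nonempty (Fin N) := let ⟨i, _⟩ := hcover ⟨x 0, h0⟩; ⟨i⟩
  have hK0 : 0 ≤ ⨆ i, |α i| := Real.iSup_nonneg fun i => abs_nonneg (α i)
  have hK1 : (⨆ i, |α i|) < 1 := by
    obtain ⟨i, hi⟩ := exists_eq_ciSup_of_finite (f := fun i => |α i|)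
    exact hi ▸ hα i
  have hcontr := ContinuousMap.dist_le_of_forall_eq_of_dist_le hK0 hcover
    (fun i t r₁ r₂ => (hv_lip i t r₁ r₂).trans <| mul_le_mul_of_nonneg_right
      (le_ciSup (f := fun i => |α i|) (finite_range _).bddAbove i) (abs_nonneg _)) hT
  have hTc : ContractingWith ⟨_, hK0⟩ T := ⟨hK1, LipschitzWith.of_dist_le_mul hcontr⟩
  have hx0L : x 0 < x (Fin.last N) := hx (Fin.pos_iff_nonempty.2 ‹_›)
  refine ⟨hcontr, hK1, hTc.fixedPoint T, ⟨?_, hTc.fixedPoint_isFixedPt, fun i t => ?_⟩,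
    fun f ⟨_, hf, _⟩ => hTc.fixedPoint_unique hf⟩
  · exact hTc.fixedPoint_mem_of_mapsTo (ContinuousMap.isClosed_setOf_eq_and_eq _ _ _ _)
      (ContinuousMap.exists_Icc_eq_left_eq_right hx0L _ _) hT𝒢
  · rw [← hT, hTc.fixedPoint_isFixedPt]

/-- The Read–Bajraktarević operator associated to interpolation data
`{(x_j, y_j)}`, homeomorphisms `u_i : I → I_i` and maps `v_i` that are continuous in
the first variable and Lipschitz with constant `|α_i| < 1` in the second, is a
contraction on `𝒢 = {g ∈ C(I) : g(x₁) = y₁, g(x_N) = y_N}` with contraction factor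
`max_i |α_i|`, and possesses a unique fixed point `f*` in `𝒢` which satisfies the
self-referential equation `f*(u_i(x)) = v_i(x, f*(x))` for all `x ∈ I` and all `i`. -/
theorem readBajraktarevic_contraction
    (N : ℕ) (hN : 0 < N) (x : Fin (N + 1) → ℝ) (hx : StrictMono x)
    (y : Fin (N + 1) → ℝ)
    (h0 : x 0 ∈ Icc (x 0) (x (Fin.last N))) (hL : x (Fin.last N) ∈ Icc (x 0) (x (Fin.last N)))
    (u : Fin N → Icc (x 0) (x (Fin.last N)) → Icc (x 0) (x (Fin.last N)))
    (hu_cont : ∀ i, Continuous (u i))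
    (hu_bij : ∀ i, Function.Injective (u i))
    (hu0 : ∀ i, (u i ⟨x 0, h0⟩ : ℝ) = x i.castSucc)
    (huN : ∀ i, (u i ⟨x (Fin.last N), hL⟩ : ℝ) = x i.succ)
    (v : Fin N → Icc (x 0) (x (Fin.last N)) → ℝ → ℝ)
    (α : Fin N → ℝ) (hα : ∀ i, |α i| < 1)
    (hv_cont : ∀ i r, Continuous fun t => v i t r)
    (hv_lip : ∀ i t r₁ r₂, |v i t r₁ - v i t r₂| ≤ |α i| * |r₁ - r₂|)
    (hv0 : ∀ i, v i ⟨x 0, h0⟩ (y 0) = y i.castSucc)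
    (hvN : ∀ i, v i ⟨x (Fin.last N), hL⟩ (y (Fin.last N)) = y i.succ)
    (hcover : ∀ p : Icc (x 0) (x (Fin.last N)), ∃ i t, u i t = p)
    (T : C(Icc (x 0) (x (Fin.last N)), ℝ) → C(Icc (x 0) (x (Fin.last N)), ℝ))
    (hT : ∀ g, ∀ i, ∀ t, T g (u i t) = v i t (g t))
    (hT𝒢 : ∀ g : C(Icc (x 0) (x (Fin.last N)), ℝ),
      g ⟨x 0, h0⟩ = y 0 ∧ g ⟨x (Fin.last N), hL⟩ = y (Fin.last N) →
      T g ⟨x 0, h0⟩ = y 0 ∧ T g ⟨x (Fin.last N), hL⟩ = y (Fin.last N)) :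
    (∀ g h : C(Icc (x 0) (x (Fin.last N)), ℝ),
        dist (T g) (T h) ≤ (⨆ i, |α i|) * dist g h) ∧
    (⨆ i, |α i|) < 1 ∧
    ∃! fstar : C(Icc (x 0) (x (Fin.last N)), ℝ),
      (fstar ⟨x 0, h0⟩ = y 0 ∧ fstar ⟨x (Fin.last N), hL⟩ = y (Fin.last N)) ∧
      T fstar = fstar ∧ ∀ i t, fstar (u i t) = v i t (fstar t) :=
  readBajraktarevic_contraction_general N x hx y h0 hL u v α hα hv_lip hcover T hT hT𝒢
end

section
/- If b ∈ C(I) satisfies the endpoint conditions and ‖α‖_∞ < 1, and if {b_n} ⊂ C(I) is a sequence of base functions with ‖f − b_n‖_∞ → 0, then the corresponding sequence of α-fractal functions f^α_n (with base function b_n and the same scaling functions α) converges uniformly to f on I. -/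
/-!
On every piece `u i (I)` the fractal function deviates from `f` by `α i · (g - b)`, and the
pieces cover `I`, so `‖g - f‖ ≤ A ‖g - b‖ ≤ A (‖g - f‖ + ‖f - b‖)` with `A = supᵢ ‖α i‖`.
For `A < 1` this rearranges to `‖g - f‖ ≤ A / (1 - A) · ‖f - b‖`, which tends to `0` with
`‖f - b‖`.
-/

open Set Filter

namespace ContinuousMap

variable {X ι : Type*} [TopologicalSpace X] [CompactSpace X]

/-- `g` is a fixed point of `T g = f + ∑ᵢ (αᵢ ∘ uᵢ⁻¹) · (g - b) ∘ uᵢ⁻¹ · χ_{uᵢ(I)}`, written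
piecewise so that `uᵢ` need not be inverted. -/
def IsAlphaFractal (f b : C(X, ℝ)) (α : ι → C(X, ℝ)) (u : ι → X → X) (g : C(X, ℝ)) : Prop :=
  ∀ i t, g (u i t) = f (u i t) + α i t * (g t - b t)

variable {f b g : C(X, ℝ)} {α : ι → C(X, ℝ)} {u : ι → X → X} {A : ℝ}

theorem IsAlphaFractal.norm_sub_le_mul (hg : IsAlphaFractal f b α u g)
    (hcover : ∀ p, ∃ i t, u i t = p) (hαA : ∀ i, ‖α i‖ ≤ A) (hA : 0 ≤ A) :
    ‖g - f‖ ≤ A * ‖g - b‖ := by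
  refine (norm_le _ (by positivity)).2 fun p => ?_
  obtain ⟨i, t, rfl⟩ := hcover p
  have hpiece : (g - f) (u i t) = α i t * (g - b) t := by
    simp only [sub_apply, hg i t]
    ring
  calc ‖(g - f) (u i t)‖ = ‖α i t‖ * ‖(g - b) t‖ := by rw [hpiece, norm_mul]
    _ ≤ A * ‖g - b‖ :=
      mul_le_mul ((norm_coe_le_norm _ t).trans (hαA i)) (norm_coe_le_norm _ t)
        (norm_nonneg _) hA

theorem IsAlphaFractal.norm_sub_le_div (hg : IsAlphaFractal f b α u g)
    (hcover : ∀ p, ∃ i t, u i t = p) (hαA : ∀ i, ‖α i‖ ≤ A) (hA : 0 ≤ A) (hA1 : A < 1) :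
    ‖g - f‖ ≤ A / (1 - A) * ‖f - b‖ := by
  have hcontract : ‖g - f‖ ≤ A * (‖g - f‖ + ‖f - b‖) :=
    (hg.norm_sub_le_mul hcover hαA hA).trans <|
      mul_le_mul_of_nonneg_left (norm_sub_le_norm_sub_add_norm_sub g f b) hA
  rw [div_mul_eq_mul_div, le_div_iff₀ (sub_pos.2 hA1)]
  linarith

theorem tendsto_norm_sub_of_isAlphaFractal {bₙ gₙ : ℕ → C(X, ℝ)}
    (hg : ∀ n, IsAlphaFractal f (bₙ n) α u (gₙ n)) (hcover : ∀ p, ∃ i t, u i t = p)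
    (hαA : ∀ i, ‖α i‖ ≤ A) (hA : 0 ≤ A) (hA1 : A < 1)
    (hb : Tendsto (fun n => ‖f - bₙ n‖) atTop (nhds 0)) :
    Tendsto (fun n => ‖gₙ n - f‖) atTop (nhds 0) := by
  refine squeeze_zero (fun n => norm_nonneg _)
    (fun n => (hg n).norm_sub_le_div hcover hαA hA hA1) ?_
  simpa using hb.const_mul (A / (1 - A))

end ContinuousMap

theorem alphaFractal_uniform_convergence_general
    (N : ℕ) (x : Fin (N + 1) → ℝ)
    (f : C(Icc (x 0) (x (Fin.last N)), ℝ))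
    (b : ℕ → C(Icc (x 0) (x (Fin.last N)), ℝ))
    (α : Fin N → C(Icc (x 0) (x (Fin.last N)), ℝ))
    (hα : (⨆ i, ‖α i‖) < 1)
    (u : Fin N → Icc (x 0) (x (Fin.last N)) → Icc (x 0) (x (Fin.last N)))
    (hcover : ∀ p : Icc (x 0) (x (Fin.last N)), ∃ i t, u i t = p)
    (fα : ℕ → C(Icc (x 0) (x (Fin.last N)), ℝ))
    (hfα : ∀ n i t, fα n (u i t) = f (u i t) + α i t * (fα n t - b n t))
    (hconv : Tendsto (fun n => ‖f - b n‖) atTop (nhds 0)) :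
    Tendsto (fun n => ‖fα n - f‖) atTop (nhds 0) :=
  ContinuousMap.tendsto_norm_sub_of_isAlphaFractal hfα hcover
    (le_ciSup (Set.finite_range fun i => ‖α i‖).bddAbove)
    (Real.iSup_nonneg fun _ => norm_nonneg _) hα hconv

/-- If `b_n ∈ C(I)` is a sequence of base functions satisfying the endpoint conditions
with `‖f − b_n‖_∞ → 0`, and `f^α_n` is the α-fractal function of `f` with base `b_n`
(same scaling functions `α`, with `‖α‖_∞ < 1`), then `f^α_n` converges uniformly to
`f` on `I`. -/
theorem alphaFractal_uniform_convergence
    (N : ℕ) (hN : 0 < N) (x : Fin (N + 1) → ℝ) (hx : StrictMono x)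
    (h0 : x 0 ∈ Icc (x 0) (x (Fin.last N))) (hL : x (Fin.last N) ∈ Icc (x 0) (x (Fin.last N)))
    (f : C(Icc (x 0) (x (Fin.last N)), ℝ))
    (b : ℕ → C(Icc (x 0) (x (Fin.last N)), ℝ))
    (hb0 : ∀ n, b n ⟨x 0, h0⟩ = f ⟨x 0, h0⟩)
    (hbN : ∀ n, b n ⟨x (Fin.last N), hL⟩ = f ⟨x (Fin.last N), hL⟩)
    (α : Fin N → C(Icc (x 0) (x (Fin.last N)), ℝ))
    (hα : (⨆ i, ‖α i‖) < 1)
    (u : Fin N → Icc (x 0) (x (Fin.last N)) → Icc (x 0) (x (Fin.last N)))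
    (hu0 : ∀ i, (u i ⟨x 0, h0⟩ : ℝ) = x i.castSucc)
    (huN : ∀ i, (u i ⟨x (Fin.last N), hL⟩ : ℝ) = x i.succ)
    (hcover : ∀ p : Icc (x 0) (x (Fin.last N)), ∃ i t, u i t = p)
    (fα : ℕ → C(Icc (x 0) (x (Fin.last N)), ℝ))
    (hfα : ∀ n i t, fα n (u i t) = f (u i t) + α i t * (fα n t - b n t))
    (hconv : Tendsto (fun n => ‖f - b n‖) atTop (nhds 0)) :
    Tendsto (fun n => ‖fα n - f‖) atTop (nhds 0) :=
  alphaFractal_uniform_convergence_general N x f b α hα u hcover fα hfα hconv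
end

section
/- Let f ∈ C(I) with f ≥ 0 on I, and suppose the continuous scaling functions α_i satisfy, for all x ∈ I and each i, max{ −φ(f,i)/(C_n − φ_n), −(C_n − Φ(f,i))/Φ_n } ≤ α_i(x) ≤ min{ φ(f,i)/Φ_n, (C_n − Φ(f,i))/(C_n − φ_n) }, where φ(f,i) = min_x f(u_i(x)), Φ(f,i) = max_x f(u_i(x)), φ_n = min_x M_{n,q}f(x), Φ_n = max_x M_{n,q}f(x), and C_n > max{φ_n, ‖f‖_∞}. Then for all (x,y) ∈ I × [0, C_n] the map v_{n,i}(x,y) = f(u_i(x)) + α_i(x)(y − M_{n,q}f(x)) satisfies 0 ≤ v_{n,i}(x,y) ≤ C_n. -/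
/-- The q-integer `[k]_q`. -/
noncomputable def qInt (q : ℝ) (k : ℕ) : ℝ := if q = 1 then (k : ℝ) else (1 - q ^ k) / (1 - q)

/-- The q-factorial `[k]_q!`. -/
noncomputable def qFactorial (q : ℝ) : ℕ → ℝ
  | 0 => 1
  | k + 1 => qInt q (k + 1) * qFactorial q k

/-- The q-binomial coefficient `(n choose k)_q`. -/
noncomputable def qBinom (q : ℝ) (n k : ℕ) : ℝ :=
  qFactorial q n / (qFactorial q k * qFactorial q (n - k))

/-- The quantum Meyer-König-Zeller operator `M_{n,q}` on `C([x₁, x_N])`. -/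
noncomputable def MKZ (q : ℝ) (n : ℕ) (x₁ xN : ℝ) (f : ℝ → ℝ) (x : ℝ) : ℝ :=
  if x = xN then f xN
  else
    ((∏ j ∈ Finset.range (n + 1), (xN - x₁ - q ^ j * (x - x₁))) / (xN - x₁) ^ (n + 1)) *
      ∑' k : ℕ, qBinom q (n + k) k * ((x - x₁) / (xN - x₁)) ^ k *
        f (x₁ + (xN - x₁) * (qInt q k / qInt q (k + n)))

/- The quantity `y - M_{n,q}f(x)` ranges over `[-Φ_n, C_n - φ_n]`, and `t ↦ f(u_i(x)) + α_i(x) t` is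
affine, so it suffices to control `α_i(x) t` at the two endpoints. Clearing denominators in the
four bounds on `α_i` gives exactly `α_i(x) Φ_n ∈ [-(C_n - Φ(f,i)), φ(f,i)]` and
`α_i(x) (C_n - φ_n) ∈ [-φ(f,i), C_n - Φ(f,i)]`; adding `f(u_i(x)) ∈ [φ(f,i), Φ(f,i)]` lands in
`[0, C_n]`. -/

open Set

variable {𝕜 : Type*} [Field 𝕜] [LinearOrder 𝕜] [IsStrictOrderedRing 𝕜]

/-- For `p ≤ 0` the hypotheses force `a = 0`, since both `lo / p` and `hi / p` are `≤ 0`. -/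
theorem mul_mem_Icc_of_neg_div_le_of_le_div {a p lo hi : 𝕜} (hlo : 0 ≤ lo) (hhi : 0 ≤ hi)
    (h₁ : -(lo / p) ≤ a) (h₂ : a ≤ hi / p) : a * p ∈ Icc (-lo) hi := by
  rcases le_or_gt p 0 with hp | hp
  · have ha : a = 0 :=
      le_antisymm (h₂.trans (div_nonpos_of_nonneg_of_nonpos hhi hp))
        ((neg_nonneg.2 (div_nonpos_of_nonneg_of_nonpos hlo hp)).trans h₁)
    simp [ha, hlo, hhi]
  · rw [← neg_div, div_le_iff₀ hp] at h₁
    exact ⟨h₁, (le_div_iff₀ hp).1 h₂⟩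

theorem mul_mem_Icc_of_mem_Icc {a l r t lo hi : 𝕜} (ht : t ∈ Icc l r)
    (hl : a * l ∈ Icc lo hi) (hr : a * r ∈ Icc lo hi) : a * t ∈ Icc lo hi :=
  uIcc_subset_Icc hl hr <| image_const_mul_uIcc a l r ▸ mem_image_of_mem _ (Icc_subset_uIcc ht)

theorem quantum_MKZ_positivity_invariance_general
    (q : ℝ) (n : ℕ) (x₁ xN : ℝ)
    (f : ℝ → ℝ)
    (hfpos : ∀ x ∈ Set.Icc x₁ xN, 0 ≤ f x)
    (u : ℝ → ℝ) (hu : ∀ t ∈ Set.Icc x₁ xN, u t ∈ Set.Icc x₁ xN)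
    (α : ℝ → ℝ)
    (φf Φf φn Φn Cn : ℝ)
    (hφf : IsLeast ((fun t => f (u t)) '' Set.Icc x₁ xN) φf)
    (hΦf : IsGreatest ((fun t => f (u t)) '' Set.Icc x₁ xN) Φf)
    (hφn : IsLeast (MKZ q n x₁ xN f '' Set.Icc x₁ xN) φn)
    (hΦn : IsGreatest (MKZ q n x₁ xN f '' Set.Icc x₁ xN) Φn)
    (hCn2 : ∀ x ∈ Set.Icc x₁ xN, |f x| < Cn)
    (hαbound : ∀ x ∈ Set.Icc x₁ xN,
      max (-φf / (Cn - φn)) (-((Cn - Φf) / Φn)) ≤ α x ∧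
      α x ≤ min (φf / Φn) ((Cn - Φf) / (Cn - φn))) :
    ∀ x ∈ Set.Icc x₁ xN, ∀ y ∈ Set.Icc (0:ℝ) Cn,
      f (u x) + α x * (y - MKZ q n x₁ xN f x) ∈ Set.Icc (0:ℝ) Cn := by
  intro x hx y hy
  obtain ⟨hαlo, hαhi⟩ := hαbound x hx
  have hφf0 : 0 ≤ φf := by
    obtain ⟨t, ht, rfl⟩ := hφf.1
    exact hfpos _ (hu t ht)
  have hΦfCn : Φf ≤ Cn := by
    obtain ⟨t, ht, rfl⟩ := hΦf.1
    exact (le_abs_self _).trans (hCn2 _ (hu t ht)).le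
  have hfu : f (u x) ∈ Icc φf Φf := ⟨hφf.2 ⟨x, hx, rfl⟩, hΦf.2 ⟨x, hx, rfl⟩⟩
  have hM : y - MKZ q n x₁ xN f x ∈ Icc (-Φn) (Cn - φn) :=
    ⟨by linarith [hΦn.2 ⟨x, hx, rfl⟩, hy.1], by linarith [hφn.2 ⟨x, hx, rfl⟩, hy.2]⟩
  have hleft : α x * -Φn ∈ Icc (-φf) (Cn - Φf) := by
    rw [mul_neg, neg_mem_Icc_iff, neg_neg]
    exact mul_mem_Icc_of_neg_div_le_of_le_div (sub_nonneg.2 hΦfCn) hφf0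
      ((le_max_right _ _).trans hαlo) (hαhi.trans (min_le_left _ _))
  have hright : α x * (Cn - φn) ∈ Icc (-φf) (Cn - Φf) :=
    mul_mem_Icc_of_neg_div_le_of_le_div hφf0 (sub_nonneg.2 hΦfCn)
      (neg_div (Cn - φn) φf ▸ (le_max_left _ _).trans hαlo) (hαhi.trans (min_le_right _ _))
  have hαt := mul_mem_Icc_of_mem_Icc hM hleft hright
  exact ⟨by linarith [hfu.1, hαt.1], by linarith [hfu.2, hαt.2]⟩

/-- Invariance of the strip `I × [0, C_n]` under the IFS maps of the positive quantum
MKZ fractal construction: if `f ≥ 0` and the scaling function `α_i` satisfies the stated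
two-sided bounds, then `v_{n,i}(x,y) = f(u_i(x)) + α_i(x)(y − M_{n,q}f(x)) ∈ [0, C_n]`
for all `(x,y) ∈ I × [0, C_n]`. -/
theorem quantum_MKZ_positivity_invariance
    (q : ℝ) (hq : q ∈ Set.Ioc (0:ℝ) 1) (n : ℕ) (x₁ xN : ℝ) (hx : x₁ < xN)
    (f : ℝ → ℝ) (hf : ContinuousOn f (Set.Icc x₁ xN))
    (hfpos : ∀ x ∈ Set.Icc x₁ xN, 0 ≤ f x)
    (u : ℝ → ℝ) (hu : ∀ t ∈ Set.Icc x₁ xN, u t ∈ Set.Icc x₁ xN)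
    (α : ℝ → ℝ) (hαlt : ∀ x ∈ Set.Icc x₁ xN, |α x| < 1)
    (φf Φf φn Φn Cn : ℝ)
    (hφf : IsLeast ((fun t => f (u t)) '' Set.Icc x₁ xN) φf)
    (hΦf : IsGreatest ((fun t => f (u t)) '' Set.Icc x₁ xN) Φf)
    (hφn : IsLeast (MKZ q n x₁ xN f '' Set.Icc x₁ xN) φn)
    (hΦn : IsGreatest (MKZ q n x₁ xN f '' Set.Icc x₁ xN) Φn)
    (hCn1 : φn < Cn) (hCn2 : ∀ x ∈ Set.Icc x₁ xN, |f x| < Cn)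
    (hαbound : ∀ x ∈ Set.Icc x₁ xN,
      max (-φf / (Cn - φn)) (-((Cn - Φf) / Φn)) ≤ α x ∧
      α x ≤ min (φf / Φn) ((Cn - Φf) / (Cn - φn))) :
    ∀ x ∈ Set.Icc x₁ xN, ∀ y ∈ Set.Icc (0:ℝ) Cn,
      f (u x) + α x * (y - MKZ q n x₁ xN f x) ∈ Set.Icc (0:ℝ) Cn :=
  quantum_MKZ_positivity_invariance_general q n x₁ xN f hfpos u hu α φf Φf φn Φn Cn hφf hΦf hφn hΦn
    hCn2 hαbound
end

section
/- Let f, g ∈ C(I) with f ≥ g on I, and suppose 0 ≤ α_i(x) ≤ min{ φ(f−g,i)/(Φ_n(f) − φ(g)), 1 } for all x ∈ I, where φ(f−g,i) = min_x (f−g)(u_i(x)), Φ_n(f) = max_x M_{n,q_n}f(x), φ(g) = min_x g(x). Then f(u_i(x)) + α_i(x)(y − M_{n,q_n}f(x)) ≥ g(u_i(x)) for every x ∈ I and every y with y ≥ g(x). -/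
/-! The scaling factor `α ≤ φ(f-g,i) / (Φ_n(f) - φ(g))` caps the drop `α (M_{n,q}f(x) - y)`
below `f(u_i(x))` by `α (Φ_n(f) - φ(g)) ≤ φ(f-g,i) ≤ f(u_i(x)) - g(u_i(x))`; when
`y ≥ M_{n,q}f(x)` there is no drop at all. -/

theorem mul_sub_le_of_le_div_sub {a c M y Φ φ : ℝ} (hc : 0 ≤ c) (ha : 0 ≤ a)
    (hac : a ≤ c / (Φ - φ)) (hM : M ≤ Φ) (hy : φ ≤ y) : a * (M - y) ≤ c := by
  rcases le_or_gt M y with hMy | hyM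
  · exact (mul_nonpos_of_nonneg_of_nonpos ha (sub_nonpos.2 hMy)).trans hc
  · have hgap : 0 < Φ - φ := by linarith
    calc a * (M - y) ≤ a * (Φ - φ) := by gcongr
      _ ≤ c := (le_div_iff₀ hgap).1 hac

theorem quantum_MKZ_one_sided_invariance_general
    (q : ℝ) (n : ℕ) (x₁ xN : ℝ)
    (f g : ℝ → ℝ)
    (hfg : ∀ x ∈ Set.Icc x₁ xN, g x ≤ f x)
    (u : ℝ → ℝ) (hu : ∀ t ∈ Set.Icc x₁ xN, u t ∈ Set.Icc x₁ xN)
    (α : ℝ → ℝ)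
    (φfg Φnf φg : ℝ)
    (hφfg : IsLeast ((fun t => f (u t) - g (u t)) '' Set.Icc x₁ xN) φfg)
    (hΦnf : IsGreatest (MKZ q n x₁ xN f '' Set.Icc x₁ xN) Φnf)
    (hφg : IsLeast (g '' Set.Icc x₁ xN) φg)
    (hαbound : ∀ x ∈ Set.Icc x₁ xN,
      0 ≤ α x ∧ α x ≤ min (φfg / (Φnf - φg)) 1) :
    ∀ x ∈ Set.Icc x₁ xN, ∀ y : ℝ, g x ≤ y →
      g (u x) ≤ f (u x) + α x * (y - MKZ q n x₁ xN f x) := by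
  intro x hx y hy
  obtain ⟨hα_nonneg, hα_le⟩ := hαbound x hx
  have hφfg_nonneg : 0 ≤ φfg := by
    obtain ⟨t, ht, rfl⟩ := hφfg.1
    exact sub_nonneg.2 (hfg _ (hu t ht))
  have hdrop : α x * (MKZ q n x₁ xN f x - y) ≤ φfg :=
    mul_sub_le_of_le_div_sub hφfg_nonneg hα_nonneg (hα_le.trans (min_le_left _ _))
      (hΦnf.2 ⟨x, hx, rfl⟩) ((hφg.2 ⟨x, hx, rfl⟩).trans hy)
  have hgap : φfg ≤ f (u x) - g (u x) := hφfg.2 ⟨x, hx, rfl⟩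
  linarith

/-- Key invariance step for one-sided approximation: if `f ≥ g` on `I` and
`0 ≤ α_i(x) ≤ min{ φ(f−g,i)/(Φ_n(f) − φ(g)), 1 }`, then
`f(u_i(x)) + α_i(x)(y − M_{n,q_n}f(x)) ≥ g(u_i(x))` for every `x ∈ I` and `y ≥ g(x)`. -/
theorem quantum_MKZ_one_sided_invariance
    (q : ℝ) (hq : q ∈ Set.Ioc (0:ℝ) 1) (n : ℕ) (x₁ xN : ℝ) (hx : x₁ < xN)
    (f g : ℝ → ℝ)
    (hf : ContinuousOn f (Set.Icc x₁ xN)) (hg : ContinuousOn g (Set.Icc x₁ xN))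
    (hfg : ∀ x ∈ Set.Icc x₁ xN, g x ≤ f x)
    (u : ℝ → ℝ) (hu : ∀ t ∈ Set.Icc x₁ xN, u t ∈ Set.Icc x₁ xN)
    (α : ℝ → ℝ)
    (φfg Φnf φg : ℝ)
    (hφfg : IsLeast ((fun t => f (u t) - g (u t)) '' Set.Icc x₁ xN) φfg)
    (hΦnf : IsGreatest (MKZ q n x₁ xN f '' Set.Icc x₁ xN) Φnf)
    (hφg : IsLeast (g '' Set.Icc x₁ xN) φg)
    (hαbound : ∀ x ∈ Set.Icc x₁ xN,
      0 ≤ α x ∧ α x ≤ min (φfg / (Φnf - φg)) 1) :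
    ∀ x ∈ Set.Icc x₁ xN, ∀ y : ℝ, g x ≤ y →
      g (u x) ≤ f (u x) + α x * (y - MKZ q n x₁ xN f x) :=
  quantum_MKZ_one_sided_invariance_general q n x₁ xN f g hfg u hu α φfg Φnf φg hφfg hΦnf hφg hαbound
end

section
/- Let f ∈ C(I) be convex, let all scaling functions satisfy 0 ≤ α_i(x) < 1, and suppose the classical MKZ operator satisfies M_n f ≥ f on I. If h ∈ C(I) satisfies h ≤ f and h(u_i(x)) = f(u_i(x)) + α_i(x)(h(x) − M_n f(x)) for all x ∈ I and all i, then h(u_i(x)) − f(u_i(x)) ≤ α_i(x)(h(x) − f(x)) ≤ 0 for all x, i.e., the fractal function lies below its germ: f_n^{(q,α)} ≤ f on I. -/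
theorem MKZ_fractal_below_germ_general
    (n : ℕ) (x₁ xN : ℝ)
    (f : ℝ → ℝ)
    (N : ℕ)
    (u : Fin N → ℝ → ℝ)
    (α : Fin N → ℝ → ℝ)
    (hα : ∀ i, ∀ x ∈ Set.Icc x₁ xN, 0 ≤ α i x ∧ α i x < 1)
    (hMge : ∀ x ∈ Set.Icc x₁ xN, f x ≤ MKZ 1 n x₁ xN f x)
    (h : ℝ → ℝ) (hhf : ∀ x ∈ Set.Icc x₁ xN, h x ≤ f x)
    (hself : ∀ i, ∀ x ∈ Set.Icc x₁ xN,
      h (u i x) = f (u i x) + α i x * (h x - MKZ 1 n x₁ xN f x)) :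
    ∀ i, ∀ x ∈ Set.Icc x₁ xN,
      h (u i x) - f (u i x) ≤ α i x * (h x - f x) ∧ α i x * (h x - f x) ≤ 0 := by
  intro i x hxI
  have hα_nonneg : 0 ≤ α i x := (hα i x hxI).1
  constructor
  · calc h (u i x) - f (u i x) = α i x * (h x - MKZ 1 n x₁ xN f x) := by
          rw [hself i x hxI]; ring
      _ ≤ α i x * (h x - f x) := by gcongr; exact hMge x hxI
  · exact mul_nonpos_of_nonneg_of_nonpos hα_nonneg (sub_nonpos.mpr (hhf x hxI))

/-- For convex `f` with nonnegative scaling functions, the MKZ fractal function lies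
below its germ: if `M_n f ≥ f` on `I` (Trif) and `h ≤ f` satisfies the self-referential
equation `h(u_i(x)) = f(u_i(x)) + α_i(x)(h(x) − M_n f(x))`, then
`h(u_i(x)) − f(u_i(x)) ≤ α_i(x)(h(x) − f(x)) ≤ 0` for all `x ∈ I` and all `i`. -/
theorem MKZ_fractal_below_germ
    (n : ℕ) (x₁ xN : ℝ) (hx : x₁ < xN)
    (f : ℝ → ℝ) (hf : ContinuousOn f (Set.Icc x₁ xN))
    (hconv : ConvexOn ℝ (Set.Icc x₁ xN) f)
    (N : ℕ) (hN : 0 < N)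
    (u : Fin N → ℝ → ℝ) (hu : ∀ i, ∀ t ∈ Set.Icc x₁ xN, u i t ∈ Set.Icc x₁ xN)
    (α : Fin N → ℝ → ℝ)
    (hα : ∀ i, ∀ x ∈ Set.Icc x₁ xN, 0 ≤ α i x ∧ α i x < 1)
    (hMge : ∀ x ∈ Set.Icc x₁ xN, f x ≤ MKZ 1 n x₁ xN f x)
    (h : ℝ → ℝ) (hhf : ∀ x ∈ Set.Icc x₁ xN, h x ≤ f x)
    (hself : ∀ i, ∀ x ∈ Set.Icc x₁ xN,
      h (u i x) = f (u i x) + α i x * (h x - MKZ 1 n x₁ xN f x)) :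
    ∀ i, ∀ x ∈ Set.Icc x₁ xN,
      h (u i x) - f (u i x) ≤ α i x * (h x - f x) ∧ α i x * (h x - f x) ≤ 0 :=
  MKZ_fractal_below_germ_general n x₁ xN f N u α hα hMge h hhf hself
end
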